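/- Let r > 0 and σ ∈ ℝ, and let (g_n)_{n∈ℤ} be the family of ℂ²-valued functions defined in the context. Then the family is pairwise orthogonal in L²(ℝ,ℂ²): for all n, m ∈ ℤ with n ≠ m, ∫_ℝ ⟨g_n(y), g_m(y)⟩_{ℂ²} dy = 0. -/

import Mathlib

/-! The components of `g_n` are multiples of `𝔥_{|n|-1}(r·)` and `𝔥_{|n|}(r·)`, so by
orthonormality of the Hermite functions `⟨g_n, g_m⟩` integrates to zero unless `|n| = |m|`.
For `m = -n` the two components contribute `α_n α_{-n} (1 + c_n c_{-n})`, where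
`c_n = √(2|n|) r / (λ_n + σ)` (`gERatio`), and `c_n c_{-n} = 2|n|r² / (σ² - λ_n²) = -1`.

Orthonormality of the Hermite functions comes from the recursion `H_{k+1} = 2y H_k - H_k'`:
integrating `(H_{j+1} H_k e^{-y²})'` over `ℝ` gives
`∫ H_{j+1} H_{k+1} e^{-y²} = 2(j+1) ∫ H_j H_k e^{-y²}` and `∫ H_{k+1} e^{-y²} = 0`. -/

noncomputable section

/-- The k-th physicists' Hermite polynomial, `H_k(y) = (−1)^k e^{y²} (d/dy)^k e^{−y²}`. -/
def physHermite (k : ℕ) (y : ℝ) : ℝ :=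
  (-1 : ℝ) ^ k * Real.exp (y ^ 2) * iteratedDeriv k (fun t => Real.exp (-t ^ 2)) y

/-- The k-th Hermite function `𝔥_k(y) = (2^k k! √π)^{−1/2} H_k(y) e^{−y²/2}`. -/
def hermiteFun (k : ℕ) (y : ℝ) : ℝ :=
  (Real.sqrt (2 ^ k * (Nat.factorial k : ℝ) * Real.sqrt Real.pi))⁻¹ *
    physHermite k y * Real.exp (-(y ^ 2) / 2)

/-- The eigenvalues `λ_n`: `λ₀ = −σ`, `λ_n = sgn(n)√(σ² + 2|n|r²)` for `n ≠ 0`. -/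
def lamE (r σ : ℝ) (n : ℤ) : ℝ :=
  if n = 0 then -σ else ((Int.sign n : ℤ) : ℝ) * Real.sqrt (σ ^ 2 + 2 * |(n : ℝ)| * r ^ 2)

/-- The normalization constants `α_n = (2r)^{−1/2}√(1 + σ/λ_n)` for `n ≠ 0`. -/
def alphaE (r σ : ℝ) (n : ℤ) : ℝ :=
  (Real.sqrt (2 * r))⁻¹ * Real.sqrt (1 + σ / lamE r σ n)

/-- The eigenfunctions `g_n : ℝ → ℂ²`. -/
def gE (r σ : ℝ) (n : ℤ) (y : ℝ) : ℂ × ℂ :=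
  if n = 0 then
    (0, (((Real.sqrt r)⁻¹ * hermiteFun 0 (r * y) : ℝ) : ℂ))
  else
    (((alphaE r σ n * hermiteFun (n.natAbs - 1) (r * y) : ℝ) : ℂ),
     ((alphaE r σ n * (Real.sqrt (2 * |(n : ℝ)|) * r / (lamE r σ n + σ)) *
        hermiteFun n.natAbs (r * y) : ℝ) : ℂ))

/-- The operator `T_{r,σ} = !![σ, y r² + i D_y; y r² − i D_y, −σ]` acting on
differentiable `w : ℝ → ℂ²`. -/
def TOp (r σ : ℝ) (w : ℝ → ℂ × ℂ) (y : ℝ) : ℂ × ℂ :=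
  ((σ : ℂ) * (w y).1 + ((y * r ^ 2 : ℝ) : ℂ) * (w y).2 + deriv (fun t => (w t).2) y,
   ((y * r ^ 2 : ℝ) : ℂ) * (w y).1 - deriv (fun t => (w t).1) y - (σ : ℂ) * (w y).2)

open Polynomial MeasureTheory Real

def physHermitePoly : ℕ → ℝ[X]
  | 0 => 1
  | k + 1 => 2 * X * physHermitePoly k - derivative (physHermitePoly k)

lemma physHermitePoly_zero : physHermitePoly 0 = 1 := rfl

lemma physHermitePoly_succ (k : ℕ) :
    physHermitePoly (k + 1) = 2 * X * physHermitePoly k - derivative (physHermitePoly k) := rfl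

lemma derivative_physHermitePoly_succ (k : ℕ) :
    derivative (physHermitePoly (k + 1)) = C (2 * (k + 1 : ℝ)) * physHermitePoly k := by
  induction k with
  | zero => simp [physHermitePoly, map_ofNat]
  | succ k ih =>
    rw [physHermitePoly_succ (k + 1), derivative_sub, derivative_mul, ih, physHermitePoly_succ k]
    simp only [derivative_mul, derivative_ofNat, derivative_X, derivative_add, derivative_one,
      derivative_natCast, C_mul, C_add, C_1, map_ofNat, Nat.cast_add, Nat.cast_one, map_natCast]
    ring

lemma hasDerivAt_eval_mul_gaussian (p : ℝ[X]) (y : ℝ) :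
    HasDerivAt (fun t => p.eval t * exp (-t ^ 2))
      ((derivative p - 2 * X * p).eval y * exp (-y ^ 2)) y := by
  have hgauss : HasDerivAt (fun t : ℝ => exp (-t ^ 2)) (exp (-y ^ 2) * -(2 * y)) y := by
    simpa using ((hasDerivAt_pow 2 y).neg).exp
  refine ((p.hasDerivAt y).mul hgauss).congr_deriv ?_
  simp only [eval_sub, eval_mul, eval_ofNat, eval_X]
  ring

lemma iteratedDeriv_gaussian (k : ℕ) (y : ℝ) :
    iteratedDeriv k (fun t => exp (-t ^ 2)) y
      = (-1) ^ k * (physHermitePoly k).eval y * exp (-y ^ 2) := by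
  induction k generalizing y with
  | zero => simp [physHermitePoly]
  | succ k ih =>
    have hk : iteratedDeriv k (fun t => exp (-t ^ 2))
        = fun t => (-1) ^ k * ((physHermitePoly k).eval t * exp (-t ^ 2)) := by
      funext t; rw [ih, mul_assoc]
    rw [iteratedDeriv_succ, hk, ((hasDerivAt_eval_mul_gaussian _ y).const_mul _).deriv,
      physHermitePoly_succ, pow_succ]
    simp only [eval_sub]
    ring

lemma physHermite_eq_eval (k : ℕ) (y : ℝ) : physHermite k y = (physHermitePoly k).eval y := by
  rw [physHermite, iteratedDeriv_gaussian]
  calc (-1) ^ k * exp (y ^ 2) * ((-1) ^ k * (physHermitePoly k).eval y * exp (-y ^ 2))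
      = ((-1) ^ k) ^ 2 * (exp (y ^ 2) * exp (-y ^ 2)) * (physHermitePoly k).eval y := by ring
    _ = (physHermitePoly k).eval y := by rw [← exp_add, ← pow_mul]; simp

lemma integrable_eval_mul_gaussian (p : ℝ[X]) : Integrable fun y => p.eval y * exp (-y ^ 2) := by
  simp_rw [eval_eq_sum_range, Finset.sum_mul]
  refine integrable_finsetSum _ fun i _ => ?_
  have hi : (-1 : ℝ) < i := by linarith [(i.cast_nonneg : (0 : ℝ) ≤ i)]
  have := (integrable_rpow_mul_exp_neg_mul_sq one_pos hi).const_mul (p.coeff i)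
  simpa only [rpow_natCast, neg_one_mul, mul_assoc] using this

lemma integral_eval_mul_gaussian_derivative (p : ℝ[X]) :
    ∫ y, (derivative p - 2 * X * p).eval y * exp (-y ^ 2) = 0 :=
  integral_eq_zero_of_hasDerivAt_of_integrable (hasDerivAt_eval_mul_gaussian p)
    (integrable_eval_mul_gaussian _) (integrable_eval_mul_gaussian p)

def physHermiteInner (j k : ℕ) : ℝ :=
  ∫ y, (physHermitePoly j).eval y * (physHermitePoly k).eval y * exp (-y ^ 2)

lemma integrable_eval_mul_eval_mul_gaussian (p q : ℝ[X]) :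
    Integrable fun y => p.eval y * q.eval y * exp (-y ^ 2) := by
  simpa only [eval_mul] using integrable_eval_mul_gaussian (p * q)

lemma physHermiteInner_comm (j k : ℕ) : physHermiteInner j k = physHermiteInner k j := by
  simp only [physHermiteInner, mul_comm ((physHermitePoly j).eval _)]

lemma physHermiteInner_zero_succ (k : ℕ) : physHermiteInner 0 (k + 1) = 0 := by
  have h := integral_eval_mul_gaussian_derivative (physHermitePoly k)
  rw [show derivative (physHermitePoly k) - 2 * X * physHermitePoly k = -physHermitePoly (k + 1)
    by rw [physHermitePoly_succ]; ring] at h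
  simpa only [physHermiteInner, physHermitePoly_zero, eval_one, one_mul, eval_neg, neg_mul,
    integral_neg, neg_eq_zero] using h

lemma physHermiteInner_succ_succ (j k : ℕ) :
    physHermiteInner (j + 1) (k + 1) = 2 * (j + 1) * physHermiteInner j k := by
  have h := integral_eval_mul_gaussian_derivative (physHermitePoly (j + 1) * physHermitePoly k)
  rw [show derivative (physHermitePoly (j + 1) * physHermitePoly k)
      - 2 * X * (physHermitePoly (j + 1) * physHermitePoly k)
      = C (2 * (j + 1 : ℝ)) * (physHermitePoly j * physHermitePoly k)
        - physHermitePoly (j + 1) * physHermitePoly (k + 1) by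
    rw [derivative_mul, derivative_physHermitePoly_succ, physHermitePoly_succ k]; ring] at h
  simp only [eval_sub, eval_mul, eval_C, sub_mul] at h
  rw [integral_sub (by simpa only [mul_assoc] using
      (integrable_eval_mul_eval_mul_gaussian _ _).const_mul (2 * (j + 1 : ℝ)))
    (integrable_eval_mul_eval_mul_gaussian _ _), sub_eq_zero] at h
  simp only [physHermiteInner, ← integral_const_mul, ← h]
  ring_nf

lemma physHermiteInner_of_lt {j k : ℕ} (h : j < k) : physHermiteInner j k = 0 := by
  induction j generalizing k with
  | zero =>
    obtain ⟨k, rfl⟩ := Nat.exists_eq_add_of_lt h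
    simpa using physHermiteInner_zero_succ k
  | succ j ih =>
    obtain ⟨k, rfl⟩ := Nat.exists_eq_add_of_lt (Nat.zero_lt_of_lt h)
    rw [zero_add, physHermiteInner_succ_succ, ih (by omega), mul_zero]

lemma physHermiteInner_of_ne {j k : ℕ} (h : j ≠ k) : physHermiteInner j k = 0 := by
  rcases h.lt_or_gt with h | h
  · exact physHermiteInner_of_lt h
  · rw [physHermiteInner_comm, physHermiteInner_of_lt h]

lemma physHermiteInner_self (k : ℕ) : physHermiteInner k k = 2 ^ k * k.factorial * √π := by
  induction k with
  | zero => simpa [physHermiteInner, physHermitePoly] using integral_gaussian 1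
  | succ k ih =>
    rw [physHermiteInner_succ_succ, ih, Nat.factorial_succ]
    push_cast
    ring

lemma hermiteFun_mul_hermiteFun (j k : ℕ) (y : ℝ) :
    hermiteFun j y * hermiteFun k y
      = (√(2 ^ j * j.factorial * √π))⁻¹ * (√(2 ^ k * k.factorial * √π))⁻¹
        * ((physHermitePoly j).eval y * (physHermitePoly k).eval y * exp (-y ^ 2)) := by
  have hexp : exp (-y ^ 2) = exp (-y ^ 2 / 2) * exp (-y ^ 2 / 2) := by rw [← exp_add]; ring_nf
  simp only [hermiteFun, physHermite_eq_eval, hexp]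
  ring

lemma integrable_hermiteFun_mul (j k : ℕ) :
    Integrable fun y => hermiteFun j y * hermiteFun k y := by
  simpa only [hermiteFun_mul_hermiteFun] using
    (integrable_eval_mul_eval_mul_gaussian _ _).const_mul _

lemma integral_hermiteFun_mul (j k : ℕ) :
    ∫ y, hermiteFun j y * hermiteFun k y = if j = k then 1 else 0 := by
  simp only [hermiteFun_mul_hermiteFun, integral_const_mul]
  change _ * physHermiteInner j k = _
  split_ifs with h
  · subst h
    rw [physHermiteInner_self, ← mul_inv, Real.mul_self_sqrt (by positivity),
      inv_mul_cancel₀ (by positivity)]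
  · rw [physHermiteInner_of_ne h, mul_zero]

lemma integral_hermiteFun_mul_comp_mul_left (r : ℝ) (j k : ℕ) :
    ∫ y, hermiteFun j (r * y) * hermiteFun k (r * y) = |r⁻¹| * if j = k then 1 else 0 := by
  rw [Measure.integral_comp_mul_left (fun y => hermiteFun j y * hermiteFun k y),
    integral_hermiteFun_mul, smul_eq_mul]

-- At `n = 0` the index `n.natAbs - 1` in `gE_eq` truncates to `0`; the zero coefficient hides it.
def gEFstCoeff (r σ : ℝ) (n : ℤ) : ℝ :=
  if n = 0 then 0 else alphaE r σ n

def gERatio (r σ : ℝ) (n : ℤ) : ℝ :=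
  √(2 * |(n : ℝ)|) * r / (lamE r σ n + σ)

def gESndCoeff (r σ : ℝ) (n : ℤ) : ℝ :=
  if n = 0 then (√r)⁻¹ else alphaE r σ n * gERatio r σ n

lemma gE_eq (r σ : ℝ) (n : ℤ) (y : ℝ) :
    gE r σ n y = (((gEFstCoeff r σ n * hermiteFun (n.natAbs - 1) (r * y) : ℝ) : ℂ),
      ((gESndCoeff r σ n * hermiteFun n.natAbs (r * y) : ℝ) : ℂ)) := by
  by_cases hn : n = 0 <;> simp [gE, gEFstCoeff, gESndCoeff, gERatio, hn]

lemma integral_inner_gE {r : ℝ} (hr : r ≠ 0) (σ : ℝ) (n m : ℤ) :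
    ∫ y, ((gE r σ n y).1 * starRingEnd ℂ (gE r σ m y).1
        + (gE r σ n y).2 * starRingEnd ℂ (gE r σ m y).2)
      = ((|r⁻¹| * (gEFstCoeff r σ n * gEFstCoeff r σ m
            * (if n.natAbs - 1 = m.natAbs - 1 then 1 else 0)
          + gESndCoeff r σ n * gESndCoeff r σ m
            * (if n.natAbs = m.natAbs then 1 else 0)) : ℝ) : ℂ) := by
  have hint (j k : ℕ) : Integrable fun y => hermiteFun j (r * y) * hermiteFun k (r * y) :=
    (integrable_hermiteFun_mul j k).comp_mul_left' hr
  simp only [gE_eq, Complex.conj_ofReal, ← Complex.ofReal_mul, ← Complex.ofReal_add]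
  rw [integral_complex_ofReal]
  congr 1
  calc ∫ y, (gEFstCoeff r σ n * hermiteFun (n.natAbs - 1) (r * y)
          * (gEFstCoeff r σ m * hermiteFun (m.natAbs - 1) (r * y))
        + gESndCoeff r σ n * hermiteFun n.natAbs (r * y)
          * (gESndCoeff r σ m * hermiteFun m.natAbs (r * y)))
      = ∫ y, (gEFstCoeff r σ n * gEFstCoeff r σ m
            * (hermiteFun (n.natAbs - 1) (r * y) * hermiteFun (m.natAbs - 1) (r * y))
          + gESndCoeff r σ n * gESndCoeff r σ m
            * (hermiteFun n.natAbs (r * y) * hermiteFun m.natAbs (r * y))) := by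
        congr 1; funext y; ring
    _ = _ := by
        rw [integral_add ((hint _ _).const_mul _) ((hint _ _).const_mul _), integral_const_mul,
          integral_const_mul, integral_hermiteFun_mul_comp_mul_left,
          integral_hermiteFun_mul_comp_mul_left]
        ring

lemma lamE_neg (r σ : ℝ) {n : ℤ} (hn : n ≠ 0) : lamE r σ (-n) = -lamE r σ n := by
  simp only [lamE, hn, neg_eq_zero, if_false, Int.sign_neg, Int.cast_neg, abs_neg]
  ring

lemma lamE_sq (r σ : ℝ) {n : ℤ} (hn : n ≠ 0) : lamE r σ n ^ 2 = σ ^ 2 + 2 * |(n : ℝ)| * r ^ 2 := by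
  rw [lamE, if_neg hn, mul_pow, sq_sqrt (by positivity), ← Int.cast_pow, ← sq_abs,
    Int.abs_sign_of_ne_zero hn, one_pow, Int.cast_one, one_mul]

lemma gERatio_mul_gERatio_neg {r : ℝ} (hr : r ≠ 0) (σ : ℝ) {n : ℤ} (hn : n ≠ 0) :
    gERatio r σ n * gERatio r σ (-n) = -1 := by
  have hsq := lamE_sq r σ hn
  have hpos : 0 < 2 * |(n : ℝ)| * r ^ 2 := by positivity
  have hfactor : (lamE r σ n + σ) * (-lamE r σ n + σ) = -(2 * |(n : ℝ)| * r ^ 2) := by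
    linear_combination -hsq
  rw [gERatio, gERatio, lamE_neg r σ hn, Int.cast_neg, abs_neg, div_mul_div_comm, hfactor, div_neg,
    mul_mul_mul_comm, mul_self_sqrt (by positivity), ← sq, div_self hpos.ne']

lemma gEFstCoeff_mul_add_gESndCoeff_mul_neg {r : ℝ} (hr : r ≠ 0) (σ : ℝ) {n : ℤ} (hn : n ≠ 0) :
    gEFstCoeff r σ n * gEFstCoeff r σ (-n) + gESndCoeff r σ n * gESndCoeff r σ (-n) = 0 := by
  simp only [gEFstCoeff, gESndCoeff, hn, neg_eq_zero, if_false]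
  linear_combination alphaE r σ n * alphaE r σ (-n) * gERatio_mul_gERatio_neg hr σ hn

/-- the family `(g_n)_{n∈ℤ}` is pairwise orthogonal in `L²(ℝ,ℂ²)`. -/
theorem stmt16 (r σ : ℝ) (hr : 0 < r) :
    ∀ n m : ℤ, n ≠ m →
      ∫ y : ℝ, ((gE r σ n y).1 * (starRingEnd ℂ) ((gE r σ m y).1)
        + (gE r σ n y).2 * (starRingEnd ℂ) ((gE r σ m y).2)) = 0 := by
  intro n m hnm
  rw [integral_inner_gE hr.ne', Complex.ofReal_eq_zero]
  by_cases habs : n.natAbs = m.natAbs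
  · obtain rfl : m = -n := (Int.natAbs_eq_natAbs_iff.mp habs.symm).resolve_left hnm.symm
    have hn : n ≠ 0 := by rintro rfl; exact hnm neg_zero.symm
    rw [if_pos (congrArg (· - 1) habs), if_pos habs, mul_one, mul_one,
      gEFstCoeff_mul_add_gESndCoeff_mul_neg hr.ne' σ hn, mul_zero]
  · have hfst : gEFstCoeff r σ n * gEFstCoeff r σ m
        * (if n.natAbs - 1 = m.natAbs - 1 then 1 else 0) = 0 := by
      by_cases hn : n = 0
      · simp [gEFstCoeff, hn]
      by_cases hm : m = 0
      · simp [gEFstCoeff, hm]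
      rw [if_neg (by omega), mul_zero]
    rw [hfst, if_neg habs, mul_zero, add_zero, mul_zero]
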